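/- Let f ∈ L¹(ℝ²) and let p = (cos θ, sin θ) be a direction vector. Then for every ξ ∈ ℝ, the Fourier transform of the Radon transform satisfies (R_p f)^(ξ) = f̂(pᵀξ), i.e. ∫_ℝ R_p f(t) e^{−i t ξ} dt = ∫_{ℝ²} f(x) e^{−i x·(ξ cos θ, ξ sin θ)} dx (the Fourier slice theorem). -/

import Mathlib

open MeasureTheory Real

/-- The Radon transform of `f : ℝ² → ℂ` with respect to the direction vector
`p = (cos θ, sin θ)`. -/
noncomputable def radon (f : ℝ × ℝ → ℂ) (θ : ℝ) (t : ℝ) : ℂ :=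
  ∫ s : ℝ, f (t * Real.cos θ - s * Real.sin θ, t * Real.sin θ + s * Real.cos θ)

/-- The (unnormalized) Fourier transform of a function on `ℝ`. -/
noncomputable def ft1 (g : ℝ → ℂ) (ξ : ℝ) : ℂ :=
  ∫ t : ℝ, g t * Complex.exp (-(Complex.I) * ((t * ξ : ℝ) : ℂ))

/-- The (unnormalized) Fourier transform of a function on `ℝ²`. -/
noncomputable def ft2 (f : ℝ × ℝ → ℂ) (γ : ℝ × ℝ) : ℂ :=
  ∫ x : ℝ × ℝ, f x * Complex.exp (-(Complex.I) * ((x.1 * γ.1 + x.2 * γ.2 : ℝ) : ℂ))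

noncomputable def rotEquiv (θ : ℝ) : (ℝ × ℝ) ≃ₗ[ℝ] (ℝ × ℝ) where
  toFun x := (x.1 * Real.cos θ - x.2 * Real.sin θ, x.1 * Real.sin θ + x.2 * Real.cos θ)
  invFun y := (y.1 * Real.cos θ + y.2 * Real.sin θ, -y.1 * Real.sin θ + y.2 * Real.cos θ)
  map_add' x y := by simp only [Prod.fst_add, Prod.snd_add, Prod.mk_add_mk]; congr 1 <;> ring
  map_smul' c x := by
    simp only [Prod.smul_fst, Prod.smul_snd, Prod.smul_mk, smul_eq_mul, RingHom.id_apply]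
    congr 1 <;> ring
  left_inv x := by
    have h := Real.sin_sq_add_cos_sq θ
    ext
    · simp only; linear_combination x.1 * h
    · simp only; linear_combination x.2 * h
  right_inv y := by
    have h := Real.sin_sq_add_cos_sq θ
    ext
    · simp only; linear_combination y.1 * h
    · simp only; linear_combination y.2 * h

lemma rot_det (θ : ℝ) : LinearMap.det ((rotEquiv θ : (ℝ × ℝ) →ₗ[ℝ] (ℝ × ℝ))) = 1 := by
  rw [← LinearMap.det_toMatrix (Module.Basis.finTwoProd ℝ), Matrix.det_fin_two]
  have h := Real.sin_sq_add_cos_sq θ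
  simp [LinearMap.toMatrix_apply, Module.Basis.finTwoProd, rotEquiv]
  linear_combination h

lemma rot_continuous (θ : ℝ) : Continuous (rotEquiv θ) := by
  apply Continuous.prodMk <;> fun_prop

lemma rot_mp (θ : ℝ) :
    MeasurePreserving (rotEquiv θ) (volume : Measure (ℝ × ℝ)) volume := by
  refine ⟨(rot_continuous θ).measurable, ?_⟩
  have : ⇑(rotEquiv θ) = ⇑((rotEquiv θ : (ℝ × ℝ) →ₗ[ℝ] (ℝ × ℝ))) := rfl
  rw [this, Measure.map_linearMap_addHaar_eq_smul_addHaar _ (by rw [rot_det]; norm_num),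
    rot_det]
  norm_num

lemma rot_emb (θ : ℝ) : MeasurableEmbedding (rotEquiv θ) := by
  have : Continuous (rotEquiv θ).symm := by apply Continuous.prodMk <;> fun_prop
  exact (Homeomorph.mk (rotEquiv θ).toEquiv (rot_continuous θ) this).measurableEmbedding

/-- Fourier slice theorem: for `f ∈ L¹(ℝ²)` and a direction vector `p = (cos θ, sin θ)`,
the Fourier transform of `R_p f` at `ξ` equals `f̂(pᵀ ξ) = f̂(ξ cos θ, ξ sin θ)`. -/
theorem fourier_slice (f : ℝ × ℝ → ℂ) (θ : ℝ)
    (hf : Integrable f (volume : Measure (ℝ × ℝ))) :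
    ∀ ξ : ℝ, ft1 (radon f θ) ξ = ft2 f (ξ * Real.cos θ, ξ * Real.sin θ) := by
  intro ξ
  have hfρ : Integrable (f ∘ (rotEquiv θ)) volume :=
    ((rot_mp θ).integrable_comp_emb (rot_emb θ)).mpr hf
  have hphase : Continuous fun x : ℝ × ℝ => Complex.exp (-(Complex.I) * ((x.1 * ξ : ℝ) : ℂ)) := by
    apply Complex.continuous_exp.comp
    fun_prop
  have hg : Integrable
      (fun x : ℝ × ℝ => f (rotEquiv θ x) * Complex.exp (-(Complex.I) * ((x.1 * ξ : ℝ) : ℂ)))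
      volume := by
    have := Integrable.bdd_mul (𝕜 := ℂ) (c := 1) hfρ hphase.aestronglyMeasurable
      (Filter.Eventually.of_forall fun x => by simp [Complex.norm_exp])
    simpa [Function.comp, mul_comm] using this
  calc ft1 (radon f θ) ξ
      = ∫ t : ℝ, ∫ s : ℝ,
          f (rotEquiv θ (t, s)) * Complex.exp (-(Complex.I) * ((t * ξ : ℝ) : ℂ)) := by
        unfold ft1 radon
        refine integral_congr_ae (Filter.Eventually.of_forall fun t => ?_)
        dsimp only
        rw [← integral_mul_const]
        rfl
    _ = ∫ x : ℝ × ℝ, f (rotEquiv θ x) * Complex.exp (-(Complex.I) * ((x.1 * ξ : ℝ) : ℂ)) := by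
        rw [show (volume : Measure (ℝ × ℝ)) = (volume : Measure ℝ).prod volume from rfl] at hg ⊢
        exact (integral_prod _ hg).symm
    _ = ∫ y : ℝ × ℝ, f y *
          Complex.exp (-(Complex.I) * (((y.1 * Real.cos θ + y.2 * Real.sin θ) * ξ : ℝ) : ℂ)) := by
        rw [← (rot_mp θ).integral_comp (rot_emb θ)
          (fun y : ℝ × ℝ => f y *
            Complex.exp (-(Complex.I) * (((y.1 * Real.cos θ + y.2 * Real.sin θ) * ξ : ℝ) : ℂ)))]
        refine integral_congr_ae (Filter.Eventually.of_forall fun x => ?_)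
        dsimp only
        have h := Real.sin_sq_add_cos_sq θ
        have hx : (((rotEquiv θ x).1 * Real.cos θ + (rotEquiv θ x).2 * Real.sin θ) * ξ : ℝ)
            = x.1 * ξ := by
          show (((x.1 * Real.cos θ - x.2 * Real.sin θ) * Real.cos θ
            + (x.1 * Real.sin θ + x.2 * Real.cos θ) * Real.sin θ) * ξ : ℝ) = x.1 * ξ
          linear_combination x.1 * ξ * h
        rw [hx]
    _ = ft2 f (ξ * Real.cos θ, ξ * Real.sin θ) := by
        unfold ft2
        refine integral_congr_ae (Filter.Eventually.of_forall fun y => ?_)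
        push_cast
        ring
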